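/- Let E be a directed graph and c a cycle without exits. Let H be the saturated closure of the set c^0 of vertices on c. Then the following are equivalent: (i) the set F_E(c^0) of paths arriving at c^0 for the first time is finite; (ii) H satisfies Condition (F) and B_H = ∅. -/

import Mathlib

/-- A directed graph: vertices, edges, source and range maps. -/
structure DirGraph where
  V : Type
  E : Type
  s : E → V
  r : E → V

/-- A walk: a candidate finite path, given by a source vertex and a list of edges. -/
structure Walk (G : DirGraph) where
  src : G.V
  edges : List G.E

/-- The range (final vertex) of a walk. -/
def Walk.rng {G : DirGraph} (p : Walk G) : G.V :=
  match p.edges.getLast? with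
  | none => p.src
  | some e => G.r e

/-- Appending two walks. -/
def Walk.append {G : DirGraph} (p q : Walk G) : Walk G := ⟨p.src, p.edges ++ q.edges⟩

/-- The `n`-fold power of a walk (concatenation with itself). -/
def Walk.pow {G : DirGraph} (c : Walk G) (n : ℕ) : Walk G :=
  ⟨c.src, (List.replicate n c.edges).flatten⟩

namespace DirGraph
variable (G : DirGraph)

/-- A walk is a genuine finite path: the first edge starts at the source and
consecutive edges match up. -/
def IsPath (p : Walk G) : Prop :=
  (∀ e, p.edges.head? = some e → G.s e = p.src) ∧
    p.edges.Chain' (fun a b => G.r a = G.s b)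

/-- A subset of vertices is hereditary. -/
def Hereditary (H : Set G.V) : Prop :=
  ∀ p : Walk G, G.IsPath p → p.src ∈ H → p.rng ∈ H

/-- A regular vertex: emits at least one and finitely many edges. -/
def Regular (v : G.V) : Prop :=
  {e | G.s e = v}.Finite ∧ {e | G.s e = v}.Nonempty

/-- A subset of vertices is saturated. -/
def Saturated (H : Set G.V) : Prop :=
  ∀ v, G.Regular v → (∀ e, G.s e = v → G.r e ∈ H) → v ∈ H

/-- The saturated closure: the smallest hereditary and saturated set containing `H`. -/
def satClosure (H : Set G.V) : Set G.V :=
  ⋂₀ {K | H ⊆ K ∧ G.Hereditary K ∧ G.Saturated K}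

/-- The set of vertices of a walk (sources of its edges). -/
def verts (c : Walk G) : Set G.V := {v | ∃ e ∈ c.edges, G.s e = v}

/-- A cycle: a nontrivial closed path with no repeated vertices except the base. -/
def IsCycle (c : Walk G) : Prop :=
  G.IsPath c ∧ c.edges ≠ [] ∧ c.rng = c.src ∧ (c.edges.map G.s).Nodup

/-- A cycle (or walk) has no exits: each vertex on it emits only the edge of the walk. -/
def NoExits (c : Walk G) : Prop :=
  ∀ e ∈ c.edges, ∀ e', G.s e' = G.s e → e' = e

/-- `F_E(H)`: paths reaching `H` exactly at their final vertex. -/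
def FE (H : Set G.V) : Set (Walk G) :=
  {α | G.IsPath α ∧ α.edges ≠ [] ∧ α.src ∉ H ∧
       (∀ e ∈ α.edges.dropLast, G.r e ∉ H) ∧ α.rng ∈ H}

/-- The breaking vertices of `H`. -/
def BH (H : Set G.V) : Set G.V :=
  {v | v ∉ H ∧ {e | G.s e = v}.Infinite ∧
       {e | G.s e = v ∧ G.r e ∉ H}.Nonempty ∧ {e | G.s e = v ∧ G.r e ∉ H}.Finite}

/-- `F_E'(H)`: members of `F_E(H)` whose last edge has source not a breaking vertex. -/
def FE' (H : Set G.V) : Set (Walk G) :=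
  {α | α ∈ G.FE H ∧ ∀ e, α.edges.getLast? = some e → G.s e ∉ G.BH H}

/-- Condition (F): `H ∪ F_E'(H) ∪ {α ∈ Path(E) : r(α) ∈ B_H}` is finite. -/
def ConditionF (H : Set G.V) : Prop :=
  H.Finite ∧ (G.FE' H).Finite ∧ {α : Walk G | G.IsPath α ∧ α.rng ∈ G.BH H}.Finite

/-- An infinite path, given by its sequence of edges. -/
def IsInfPath (x : ℕ → G.E) : Prop := ∀ i, G.r (x i) = G.s (x (i + 1))

/-- The edge sequence of the concatenation of a finite walk with an infinite edge sequence. -/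
def concatSeq (p : Walk G) (x : ℕ → G.E) : ℕ → G.E := fun n =>
  if h : n < p.edges.length then p.edges.get ⟨n, h⟩ else x (n - p.edges.length)

end DirGraph

/-!
Write `X = c⁰` and `H` for its saturated closure. Since `c` has no exits, `X` is hereditary, so
`H` is the increasing union of the stages `X₀ = X`,
`Xₙ₊₁ = Xₙ ∪ {regular v with all edges into Xₙ}`. Hence every vertex of `H` has a path into `X`
meeting `X` only at its end, and from a vertex of `Xₙ` there are only finitely many such paths
(induction on `n`).

If `F_E(X)` is finite, then `H \ X` is finite, its vertices being sources of paths in `F_E(X)`,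
and `F_E(H)` is finite, each of its paths being a prefix of a path in `F_E(X)`. Conversely, every
path in `F_E(X)` splits at its first vertex in `H` into a path of `F_E(H)` (or a trivial one)
followed by one of the finitely many first-hit paths from `H` into `X`. Finally, finiteness of
`F_E(H)` alone forces `B_H = ∅`, and once `B_H = ∅`, Condition (F) says that `H` and `F_E(H)` are
finite.
-/

namespace Walk
variable {G : DirGraph}

@[simp]
lemma rng_nil (v : G.V) : Walk.rng (⟨v, []⟩ : Walk G) = v := rfl

@[simp]
lemma rng_cons (v : G.V) (e : G.E) (l : List G.E) :
    Walk.rng (⟨v, e :: l⟩ : Walk G) = Walk.rng (⟨G.r e, l⟩ : Walk G) := by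
  cases l using List.reverseRecOn with
  | nil => rfl
  | append_singleton l b _ =>
    have h : (e :: (l ++ [b])).getLast? = some b := by rw [← List.cons_append, List.getLast?_concat]
    simp [Walk.rng, h]

lemma append_cons (v : G.V) (e : G.E) (l : List G.E) (q : Walk G) :
    Walk.append ⟨v, e :: l⟩ q = ⟨v, e :: (Walk.append ⟨G.r e, l⟩ q).edges⟩ := rfl

end Walk

namespace DirGraph
variable {G : DirGraph}

lemma isPath_nil (v : G.V) : G.IsPath ⟨v, []⟩ := ⟨by simp, List.isChain_nil⟩

lemma isPath_cons_iff {v : G.V} {e : G.E} {l : List G.E} :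
    G.IsPath ⟨v, e :: l⟩ ↔ G.s e = v ∧ G.IsPath ⟨G.r e, l⟩ := by
  constructor
  · rintro ⟨hhead, hchain⟩
    obtain ⟨hlink, htail⟩ := List.isChain_cons.1 hchain
    exact ⟨hhead e rfl, fun e' he' => (hlink e' he').symm, htail⟩
  · rintro ⟨rfl, hlink, htail⟩
    refine ⟨fun e' he' => by cases he'; rfl, List.isChain_cons.2 ⟨?_, htail⟩⟩
    exact fun e' he' => (hlink e' he').symm

lemma hereditary_iff {K : Set G.V} : G.Hereditary K ↔ ∀ e, G.s e ∈ K → G.r e ∈ K := by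
  refine ⟨fun h e he => h ⟨G.s e, [e]⟩ (isPath_cons_iff.2 ⟨rfl, isPath_nil _⟩) he, fun h => ?_⟩
  rintro ⟨v, l⟩ hp hv
  induction l generalizing v with
  | nil => exact hv
  | cons e l ih =>
    obtain ⟨rfl, htail⟩ := isPath_cons_iff.1 hp
    simpa using ih _ htail (h e hv)

lemma IsPath.r_eq_rng_or_exists_s_eq {v : G.V} {l : List G.E} (hp : G.IsPath ⟨v, l⟩) {e : G.E}
    (he : e ∈ l) : G.r e = Walk.rng ⟨v, l⟩ ∨ ∃ e' ∈ l, G.s e' = G.r e := by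
  induction l generalizing v with
  | nil => simp at he
  | cons a t ih =>
    obtain ⟨-, ht⟩ := isPath_cons_iff.1 hp
    rw [Walk.rng_cons]
    rcases List.mem_cons.1 he with rfl | he
    · cases t with
      | nil => exact Or.inl rfl
      | cons b t => exact Or.inr ⟨b, by simp, (isPath_cons_iff.1 ht).1⟩
    · exact (ih ht he).imp_right fun ⟨e', he', h⟩ => ⟨e', List.mem_cons_of_mem a he', h⟩

lemma IsCycle.r_mem_verts {c : Walk G} (hc : G.IsCycle c) {e : G.E} (he : e ∈ c.edges) :
    G.r e ∈ G.verts c := by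
  obtain ⟨v, l⟩ := c
  obtain ⟨hp, hnil, hrng, -⟩ := hc
  rcases hp.r_eq_rng_or_exists_s_eq he with h | ⟨e', he', h⟩
  · obtain ⟨a, t, rfl⟩ := List.exists_cons_of_ne_nil hnil
    exact ⟨a, List.mem_cons_self, (isPath_cons_iff.1 hp).1.trans (h.trans hrng).symm⟩
  · exact ⟨e', he', h⟩

lemma IsCycle.hereditary_verts {c : Walk G} (hc : G.IsCycle c) (hne : G.NoExits c) :
    G.Hereditary (G.verts c) :=
  hereditary_iff.2 fun e ⟨e', he', hs⟩ => hne e' he' e hs.symm ▸ hc.r_mem_verts he'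

lemma verts_finite (c : Walk G) : (G.verts c).Finite :=
  c.edges.finite_toSet.image G.s

/-- Paths meeting `X` exactly at their final vertex; unlike `FE X`, this includes the trivial
paths at vertices of `X`. -/
def firstHitPaths (G : DirGraph) (X : Set G.V) : Set (Walk G) :=
  {p | G.IsPath p ∧ (∀ e ∈ p.edges, G.s e ∉ X) ∧ p.rng ∈ X}

section firstHitPaths
variable {X H : Set G.V}

@[simp]
lemma nil_mem_firstHitPaths {v : G.V} : (⟨v, []⟩ : Walk G) ∈ G.firstHitPaths X ↔ v ∈ X := by
  simp [firstHitPaths, isPath_nil]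

lemma cons_mem_firstHitPaths {v : G.V} {e : G.E} {l : List G.E} :
    (⟨v, e :: l⟩ : Walk G) ∈ G.firstHitPaths X ↔
      G.s e = v ∧ v ∉ X ∧ (⟨G.r e, l⟩ : Walk G) ∈ G.firstHitPaths X := by
  simp only [firstHitPaths, Set.mem_ofPred_eq, isPath_cons_iff, List.mem_cons, forall_eq_or_imp,
    Walk.rng_cons]
  constructor
  · rintro ⟨⟨rfl, hp⟩, ⟨hv, hl⟩, hr⟩
    exact ⟨rfl, hv, hp, hl, hr⟩
  · rintro ⟨rfl, hv, hp, hl, hr⟩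
    exact ⟨⟨rfl, hp⟩, ⟨hv, hl⟩, hr⟩

lemma cons_mem_FE_iff {v : G.V} {e : G.E} {l : List G.E} :
    (⟨v, e :: l⟩ : Walk G) ∈ G.FE X ↔ (⟨v, e :: l⟩ : Walk G) ∈ G.firstHitPaths X := by
  induction l generalizing v e with
  | nil => simp [FE, cons_mem_firstHitPaths, isPath_cons_iff, isPath_nil]
  | cons e' l ih =>
    rw [cons_mem_firstHitPaths, ← ih]
    simp only [FE, Set.mem_ofPred_eq, isPath_cons_iff, List.dropLast_cons_cons, List.mem_cons,
      forall_eq_or_imp, Walk.rng_cons]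
    tauto

lemma mem_FE_iff {p : Walk G} : p ∈ G.FE X ↔ p ∈ G.firstHitPaths X ∧ p.edges ≠ [] := by
  obtain ⟨v, _ | ⟨e, l⟩⟩ := p
  · simp [FE]
  · simp [cons_mem_FE_iff]

lemma mem_FE_of_mem_firstHitPaths {p : Walk G} (hp : p ∈ G.firstHitPaths X) (hsrc : p.src ∉ X) :
    p ∈ G.FE X := by
  obtain ⟨v, _ | ⟨e, l⟩⟩ := p
  · exact absurd (nil_mem_firstHitPaths.1 hp) hsrc
  · exact cons_mem_FE_iff.2 hp

lemma firstHitPaths_subset : G.firstHitPaths X ⊆ G.FE X ∪ (fun v => ⟨v, []⟩) '' X := by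
  rintro ⟨v, _ | ⟨e, l⟩⟩ hp
  · exact Or.inr ⟨v, nil_mem_firstHitPaths.1 hp, rfl⟩
  · exact Or.inl (cons_mem_FE_iff.2 hp)

lemma append_mem_firstHitPaths (hXH : X ⊆ H) {p q : Walk G} (hp : p ∈ G.firstHitPaths H)
    (hq : q ∈ G.firstHitPaths X) (hpq : q.src = p.rng) : p.append q ∈ G.firstHitPaths X := by
  obtain ⟨v, l⟩ := p
  induction l generalizing v with
  | nil =>
    obtain ⟨w, m⟩ := q
    obtain rfl : w = v := hpq
    exact hq
  | cons e l ih =>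
    obtain ⟨rfl, hv, hp⟩ := cons_mem_firstHitPaths.1 hp
    rw [Walk.append_cons, cons_mem_firstHitPaths]
    exact ⟨rfl, fun h => hv (hXH h), ih _ hp (by simpa using hpq)⟩

lemma exists_append_eq_of_mem_firstHitPaths (hXH : X ⊆ H) {p : Walk G}
    (hp : p ∈ G.firstHitPaths X) :
    ∃ α ∈ G.firstHitPaths H, ∃ γ ∈ G.firstHitPaths X,
      α.src = p.src ∧ γ.src = α.rng ∧ α.append γ = p := by
  obtain ⟨v, l⟩ := p
  induction l generalizing v with
  | nil =>
    have hv : v ∈ X := nil_mem_firstHitPaths.1 hp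
    exact ⟨⟨v, []⟩, nil_mem_firstHitPaths.2 (hXH hv), _, hp, rfl, rfl, rfl⟩
  | cons e l ih =>
    by_cases hv : v ∈ H
    · exact ⟨⟨v, []⟩, nil_mem_firstHitPaths.2 hv, _, hp, rfl, rfl, rfl⟩
    obtain ⟨rfl, -, htail⟩ := cons_mem_firstHitPaths.1 hp
    obtain ⟨⟨w, m⟩, hα, γ, hγ, rfl, hγα, heq⟩ := ih _ htail
    refine ⟨⟨G.s e, e :: m⟩, cons_mem_firstHitPaths.2 ⟨rfl, hv, hα⟩, γ, hγ, rfl,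
      by simpa using hγα, ?_⟩
    rw [Walk.append_cons, heq]

end firstHitPaths

lemma BH_eq_empty_of_finite_FE {H : Set G.V} (hFE : (G.FE H).Finite) : G.BH H = ∅ := by
  refine Set.eq_empty_of_forall_notMem ?_
  rintro v ⟨hvH, hinf, -, hfin⟩
  refine hinf ?_
  have hinto : {e | G.s e = v ∧ G.r e ∈ H}.Finite := by
    refine Set.Finite.of_finite_image (f := fun e => (⟨v, [e]⟩ : Walk G)) (hFE.subset ?_)
      fun a _ b _ hab => by simpa using hab
    rintro _ ⟨e, ⟨rfl, he⟩, rfl⟩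
    exact cons_mem_FE_iff.2 (cons_mem_firstHitPaths.2 ⟨rfl, hvH, nil_mem_firstHitPaths.2 he⟩)
  refine (hinto.union hfin).subset fun e he => ?_
  by_cases h : G.r e ∈ H
  exacts [Or.inl ⟨he, h⟩, Or.inr ⟨he, h⟩]

lemma conditionF_and_BH_eq_empty_iff {H : Set G.V} :
    G.ConditionF H ∧ G.BH H = ∅ ↔ H.Finite ∧ (G.FE H).Finite := by
  constructor
  · rintro ⟨⟨hH, hFE', -⟩, hB⟩
    exact ⟨hH, hFE'.subset fun α hα => ⟨hα, fun e _ => by simp [hB]⟩⟩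
  · rintro ⟨hH, hFE⟩
    have hB := BH_eq_empty_of_finite_FE hFE
    exact ⟨⟨hH, hFE.subset fun α hα => hα.1, by simp [hB]⟩, hB⟩

def saturationStage (G : DirGraph) (X : Set G.V) : ℕ → Set G.V
  | 0 => X
  | n + 1 => G.saturationStage X n ∪
      {v | G.Regular v ∧ ∀ e, G.s e = v → G.r e ∈ G.saturationStage X n}

section saturationStage
variable {X : Set G.V}

lemma saturationStage_mono : Monotone (G.saturationStage X) :=
  monotone_nat_of_le_succ fun _ => Set.subset_union_left

lemma saturationStage_subset_satClosure : ∀ n, G.saturationStage X n ⊆ G.satClosure X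
  | 0 => fun _ hv => Set.mem_sInter.2 fun _ hK => hK.1 hv
  | n + 1 => by
    rintro v (hv | ⟨hreg, hall⟩)
    · exact saturationStage_subset_satClosure n hv
    · refine Set.mem_sInter.2 fun K hK => hK.2.2 v hreg fun e he => ?_
      exact Set.mem_sInter.1 (saturationStage_subset_satClosure n (hall e he)) K hK

lemma subset_satClosure : X ⊆ G.satClosure X := saturationStage_subset_satClosure 0

lemma saturated_iUnion_saturationStage : G.Saturated (⋃ n, G.saturationStage X n) := by
  intro v hreg hall
  have hrng : ((hreg.1.image G.r).toFinset : Set G.V) ⊆ ⋃ n, G.saturationStage X n := by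
    rw [Set.Finite.coe_toFinset]
    rintro _ ⟨e, he, rfl⟩
    exact hall e he
  obtain ⟨n, hn⟩ := saturationStage_mono.directed_le.exists_mem_subset_of_finset_subset_biUnion hrng
  refine Set.mem_iUnion.2 ⟨n + 1, Or.inr ⟨hreg, fun e he => hn ?_⟩⟩
  rw [Set.Finite.coe_toFinset]
  exact ⟨e, he, rfl⟩

lemma hereditary_saturationStage (hX : G.Hereditary X) (n : ℕ) :
    G.Hereditary (G.saturationStage X n) := by
  induction n with
  | zero => exact hX
  | succ n ih =>
    refine hereditary_iff.2 fun e he => Set.subset_union_left ?_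
    rcases he with he | ⟨-, hall⟩
    exacts [hereditary_iff.1 ih e he, hall e rfl]

lemma satClosure_eq_iUnion_saturationStage (hX : G.Hereditary X) :
    G.satClosure X = ⋃ n, G.saturationStage X n := by
  refine subset_antisymm (Set.sInter_subset_of_mem ⟨Set.subset_iUnion (G.saturationStage X) 0, ?_,
    saturated_iUnion_saturationStage⟩) (Set.iUnion_subset saturationStage_subset_satClosure)
  refine hereditary_iff.2 fun e he => ?_
  obtain ⟨n, hn⟩ := Set.mem_iUnion.1 he
  exact Set.mem_iUnion.2 ⟨n, hereditary_iff.1 (hereditary_saturationStage hX n) e hn⟩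

lemma exists_mem_firstHitPaths_of_mem_saturationStage :
    ∀ {n : ℕ} {w : G.V}, w ∈ G.saturationStage X n → ∃ p ∈ G.firstHitPaths X, p.src = w
  | 0, w, hw => ⟨⟨w, []⟩, nil_mem_firstHitPaths.2 hw, rfl⟩
  | n + 1, w, hw => by
    by_cases hwn : w ∈ G.saturationStage X n
    · exact exists_mem_firstHitPaths_of_mem_saturationStage hwn
    obtain ⟨hreg, hall⟩ := hw.resolve_left hwn
    obtain ⟨e, rfl⟩ := hreg.2
    obtain ⟨⟨_, l⟩, hp, rfl⟩ := exists_mem_firstHitPaths_of_mem_saturationStage (hall e rfl)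
    have hwX : G.s e ∉ X := fun h => hwn (saturationStage_mono (Nat.zero_le n) h)
    exact ⟨⟨G.s e, e :: l⟩, cons_mem_firstHitPaths.2 ⟨rfl, hwX, hp⟩, rfl⟩

lemma finite_firstHitPaths_src_eq_of_mem_saturationStage :
    ∀ {n : ℕ} {w : G.V}, w ∈ G.saturationStage X n →
      {p ∈ G.firstHitPaths X | p.src = w}.Finite
  | 0, w, hw => by
    refine (Set.finite_singleton (⟨w, []⟩ : Walk G)).subset ?_
    rintro ⟨_, _ | ⟨e, l⟩⟩ ⟨hp, rfl⟩
    · rfl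
    · exact absurd hw (cons_mem_firstHitPaths.1 hp).2.1
  | n + 1, w, hw => by
    by_cases hwn : w ∈ G.saturationStage X n
    · exact finite_firstHitPaths_src_eq_of_mem_saturationStage hwn
    obtain ⟨hreg, hall⟩ := hw.resolve_left hwn
    have hwX : w ∉ X := fun h => hwn (saturationStage_mono (Nat.zero_le n) h)
    refine (hreg.1.biUnion fun e he =>
      (finite_firstHitPaths_src_eq_of_mem_saturationStage (hall e he)).image
        fun q => (⟨w, e :: q.edges⟩ : Walk G)).subset ?_
    rintro ⟨_, _ | ⟨e, l⟩⟩ ⟨hp, rfl⟩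
    · exact absurd (nil_mem_firstHitPaths.1 hp) hwX
    · obtain ⟨he, -, htail⟩ := cons_mem_firstHitPaths.1 hp
      exact Set.mem_biUnion he ⟨⟨G.r e, l⟩, ⟨htail, rfl⟩, rfl⟩

end saturationStage

lemma finite_prefixes (p : Walk G) : {q : Walk G | q.src = p.src ∧ q.edges <+: p.edges}.Finite := by
  refine (p.edges.inits.finite_toSet.image fun l => (⟨p.src, l⟩ : Walk G)).subset ?_
  rintro ⟨v, l⟩ ⟨rfl, hl⟩
  exact ⟨l, (List.mem_inits _ _).2 hl, rfl⟩

section satClosure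
variable {X : Set G.V} (hX : G.Hereditary X)
include hX

lemma exists_mem_firstHitPaths_of_mem_satClosure {w : G.V} (hw : w ∈ G.satClosure X) :
    ∃ p ∈ G.firstHitPaths X, p.src = w := by
  rw [satClosure_eq_iUnion_saturationStage hX, Set.mem_iUnion] at hw
  exact exists_mem_firstHitPaths_of_mem_saturationStage hw.choose_spec

lemma finite_firstHitPaths_src_eq_of_mem_satClosure {w : G.V} (hw : w ∈ G.satClosure X) :
    {p ∈ G.firstHitPaths X | p.src = w}.Finite := by
  rw [satClosure_eq_iUnion_saturationStage hX, Set.mem_iUnion] at hw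
  exact finite_firstHitPaths_src_eq_of_mem_saturationStage hw.choose_spec

lemma finite_satClosure_of_finite_FE (hXfin : X.Finite) (hFE : (G.FE X).Finite) :
    (G.satClosure X).Finite := by
  refine (hXfin.union (hFE.image Walk.src)).subset fun w hw => ?_
  by_cases hwX : w ∈ X
  · exact Or.inl hwX
  obtain ⟨p, hp, rfl⟩ := exists_mem_firstHitPaths_of_mem_satClosure hX hw
  exact Or.inr ⟨p, mem_FE_of_mem_firstHitPaths hp hwX, rfl⟩

lemma finite_FE_satClosure_of_finite_FE (hFE : (G.FE X).Finite) :
    (G.FE (G.satClosure X)).Finite := by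
  refine (hFE.biUnion fun p _ => finite_prefixes p).subset fun α hα => ?_
  obtain ⟨hα', -⟩ := mem_FE_iff.1 hα
  obtain ⟨β, hβ, hβα⟩ := exists_mem_firstHitPaths_of_mem_satClosure hX hα'.2.2
  have hαβ := append_mem_firstHitPaths subset_satClosure hα' hβ hβα
  exact Set.mem_biUnion (mem_FE_of_mem_firstHitPaths hαβ fun h => hα.2.2.1 (subset_satClosure h))
    ⟨rfl, List.prefix_append _ _⟩

lemma finite_FE_of_finite_satClosure (hH : (G.satClosure X).Finite)
    (hFE : (G.FE (G.satClosure X)).Finite) : (G.FE X).Finite := by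
  have hheads : (G.firstHitPaths (G.satClosure X)).Finite :=
    (hFE.union (hH.image _)).subset firstHitPaths_subset
  have htails : {γ ∈ G.firstHitPaths X | γ.src ∈ G.satClosure X}.Finite :=
    (hH.biUnion fun _ hw => finite_firstHitPaths_src_eq_of_mem_satClosure hX hw).subset
      fun γ hγ => Set.mem_biUnion hγ.2 ⟨hγ.1, rfl⟩
  refine ((hheads.prod htails).image fun q => q.1.append q.2).subset fun p hp => ?_
  obtain ⟨α, hα, γ, hγ, -, hγα, rfl⟩ :=
    exists_append_eq_of_mem_firstHitPaths subset_satClosure (mem_FE_iff.1 hp).1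
  exact ⟨(α, γ), ⟨hα, hγ, hγα ▸ hα.2.2⟩, rfl⟩

theorem finite_FE_iff_of_hereditary (hXfin : X.Finite) :
    (G.FE X).Finite ↔ (G.satClosure X).Finite ∧ (G.FE (G.satClosure X)).Finite :=
  ⟨fun h => ⟨finite_satClosure_of_finite_FE hX hXfin h, finite_FE_satClosure_of_finite_FE hX h⟩,
    fun h => finite_FE_of_finite_satClosure hX h.1 h.2⟩

end satClosure

end DirGraph

/-- for a cycle without exits `c` with `H` the saturated closure of `c⁰`:
`F_E(c⁰)` is finite iff `H` satisfies Condition (F) and `B_H = ∅`. -/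
theorem FE_finite_iff_conditionF (G : DirGraph) (c : Walk G)
    (hc : G.IsCycle c) (hne : G.NoExits c) :
    (G.FE (G.verts c)).Finite ↔
      (G.ConditionF (G.satClosure (G.verts c)) ∧ G.BH (G.satClosure (G.verts c)) = ∅) := by
  rw [DirGraph.conditionF_and_BH_eq_empty_iff]
  exact DirGraph.finite_FE_iff_of_hereditary (hc.hereditary_verts hne) (DirGraph.verts_finite c)
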